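/- Let 1/3 < d_x < 1/2 and 1/3 < d_ε < 1/2. There exists a constant C (depending only on d_x, d_ε) such that for all integers n ≥ M ≥ 1: n^{−1} Σ_{p=−M}^{M} (|p|+1)^{2(d_x+d_ε−1)} Σ_{q=−M}^{M} (|q|+1)^{2(d_x+d_ε−1)} Σ_{r=−n+1}^{n−1} (|r−p|+1)^{d_x+d_ε−1}(|r+q|+1)^{d_x+d_ε−1} ≤ C ( M^{4d_x+4d_ε−1} n^{−1} + M^{4d_x+4d_ε−2} n^{2d_x+2d_ε−2} ). -/

import Mathlib

/-!
With `b = 2(d_x + d_ε - 1) ∈ (-1, 0)`, the tangent-line inequality for the concave map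
`x ↦ x ^ (b + 1)` telescopes to `∑_{|s| ≤ N} (|s| + 1) ^ b = O(N ^ (b + 1))`.
By AM–GM the product of the two covariance factors in the `r`-sum is at most the mean of their
squares, and each of these is a shifted window of `(|s| + 1) ^ b` inside `|s| ≤ 2n`; hence the
`r`-sum is `O(n ^ (b + 1))` uniformly in `|p|, |q| ≤ M`. The `p`- and `q`-weights each sum to
`O(M ^ (b + 1))`, so the whole expression is `O(M ^ (2b + 2) n ^ b)`, the second term of the bound.
-/

open Finset

theorem rpow_le_tangent {p x y : ℝ} (hp0 : 0 ≤ p) (hp1 : p ≤ 1) (hx : 0 < x) (hy : 0 ≤ y) :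
    y ^ p ≤ x ^ p + p * x ^ (p - 1) * (y - x) := by
  have hs : -1 ≤ (y - x) / x := by rw [le_div_iff₀ hx]; linarith
  have hbern := rpow_one_add_le_one_add_mul_self hs hp0 hp1
  rw [show 1 + (y - x) / x = y / x by field_simp; ring, Real.div_rpow hy hx.le,
    div_le_iff₀ (Real.rpow_pos_of_pos hx p)] at hbern
  rw [Real.rpow_sub_one hx.ne']
  calc y ^ p ≤ (1 + p * ((y - x) / x)) * x ^ p := hbern
    _ = x ^ p + p * (x ^ p / x) * (y - x) := by ring

theorem sum_range_add_one_rpow_le {b : ℝ} (hb : -1 < b) (hb0 : b ≤ 0) (N : ℕ) :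
    ∑ k ∈ range N, ((k : ℝ) + 1) ^ b ≤ (N : ℝ) ^ (b + 1) / (b + 1) := by
  have hb1 : 0 < b + 1 := by linarith
  have hterm : ∀ k : ℕ, ((k : ℝ) + 1) ^ b
      ≤ ((((k + 1 : ℕ) : ℝ)) ^ (b + 1) - (k : ℝ) ^ (b + 1)) / (b + 1) := by
    intro k
    have h := rpow_le_tangent hb1.le (by linarith) (by positivity : (0 : ℝ) < k + 1)
      (Nat.cast_nonneg k)
    rw [add_sub_cancel_right] at h
    rw [le_div_iff₀ hb1]
    push_cast
    linarith
  calc ∑ k ∈ range N, ((k : ℝ) + 1) ^ b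
      ≤ ∑ k ∈ range N, ((((k + 1 : ℕ) : ℝ)) ^ (b + 1) - (k : ℝ) ^ (b + 1)) / (b + 1) :=
        sum_le_sum fun k _ => hterm k
    _ = (N : ℝ) ^ (b + 1) / (b + 1) := by
        rw [← sum_div, sum_range_sub (fun k : ℕ => (k : ℝ) ^ (b + 1)), Nat.cast_zero,
          Real.zero_rpow hb1.ne', sub_zero]

theorem sum_Icc_neg_abs_add_one_rpow_le {b : ℝ} (hb : -1 < b) (hb0 : b ≤ 0) (N : ℕ) :
    ∑ s ∈ Icc (-(N : ℤ)) N, ((|s| : ℝ) + 1) ^ b ≤ 2 * ((N : ℝ) + 1) ^ (b + 1) / (b + 1) := by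
  have heven : Function.Even fun s : ℤ => ((|s| : ℝ) + 1) ^ b := fun s => by
    simp only [Int.cast_neg, abs_neg]
  rw [sum_Icc_of_even_eq_range heven]
  have h := sum_range_add_one_rpow_le hb hb0 (N + 1)
  simp only [Int.cast_natCast, Nat.abs_cast, Int.cast_zero, abs_zero, zero_add, Real.one_rpow,
    Nat.cast_add, Nat.cast_one, two_nsmul] at h ⊢
  rw [mul_div_assoc]
  linarith

theorem rpow_le_mul_rpow_of_le_mul {x y c e : ℝ} (hx : 0 ≤ x) (hy : 0 ≤ y) (hc : 1 ≤ c)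
    (he0 : 0 ≤ e) (he1 : e ≤ 1) (hxy : x ≤ c * y) : x ^ e ≤ c * y ^ e :=
  calc x ^ e ≤ (c * y) ^ e := Real.rpow_le_rpow hx hxy he0
    _ = c ^ e * y ^ e := Real.mul_rpow (by linarith) hy
    _ ≤ c * y ^ e := by
        gcongr
        simpa using Real.rpow_le_rpow_of_exponent_le hc he1

theorem sum_Icc_neg_abs_add_one_rpow_le_of_one_le {b : ℝ} (hb : -1 < b) (hb0 : b ≤ 0) {N : ℕ}
    (hN : 1 ≤ N) :
    ∑ s ∈ Icc (-(N : ℤ)) N, ((|s| : ℝ) + 1) ^ b ≤ 4 / (b + 1) * (N : ℝ) ^ (b + 1) := by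
  have hb1 : 0 < b + 1 := by linarith
  have hN' : (1 : ℝ) ≤ N := by exact_mod_cast hN
  have h := rpow_le_mul_rpow_of_le_mul (by positivity) (Nat.cast_nonneg N) one_le_two hb1.le
    (by linarith) (by linarith : (N : ℝ) + 1 ≤ 2 * N)
  calc _ ≤ 2 * ((N : ℝ) + 1) ^ (b + 1) / (b + 1) := sum_Icc_neg_abs_add_one_rpow_le hb hb0 N
    _ ≤ 2 * (2 * (N : ℝ) ^ (b + 1)) / (b + 1) := by gcongr
    _ = 4 / (b + 1) * (N : ℝ) ^ (b + 1) := by ring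

theorem sum_Icc_comp_add_le {f : ℤ → ℝ} (hf : ∀ s, 0 ≤ f s) {a a' c L L' : ℤ}
    (hL : L ≤ a + c) (hL' : a' + c ≤ L') :
    ∑ r ∈ Icc a a', f (r + c) ≤ ∑ s ∈ Icc L L', f s := by
  have hmap : ∑ r ∈ Icc a a', f (r + c) = ∑ s ∈ Icc (a + c) (a' + c), f s := by
    rw [← map_add_right_Icc, sum_map]
    rfl
  rw [hmap]
  exact sum_le_sum_of_subset_of_nonneg (Icc_subset_Icc hL hL') fun s _ _ => hf s

theorem sum_Icc_abs_add_add_one_rpow_le {b : ℝ} (hb : -1 < b) (hb0 : b ≤ 0) {n : ℕ} (hn : 1 ≤ n)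
    {c : ℤ} (hc : |c| ≤ n) :
    ∑ r ∈ Icc (-(n : ℤ) + 1) (n - 1), ((|r + c| : ℝ) + 1) ^ b ≤ 8 / (b + 1) * (n : ℝ) ^ (b + 1) := by
  have hb1 : 0 < b + 1 := by linarith
  obtain ⟨hc1, hc2⟩ := abs_le.mp hc
  have hshift := sum_Icc_comp_add_le (f := fun s : ℤ => ((|s| : ℝ) + 1) ^ b)
    (fun s => by positivity) (a := -(n : ℤ) + 1) (a' := n - 1) (c := c)
    (L := -((2 * n : ℕ) : ℤ)) (L' := ((2 * n : ℕ) : ℤ)) (by push_cast; omega) (by push_cast; omega)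
  have h2n := sum_Icc_neg_abs_add_one_rpow_le_of_one_le hb hb0 (by omega : 1 ≤ 2 * n)
  have hpow := rpow_le_mul_rpow_of_le_mul (by positivity) (Nat.cast_nonneg n) one_le_two hb1.le
    (by linarith) (le_refl (2 * (n : ℝ)))
  push_cast at hshift h2n
  calc _ ≤ 4 / (b + 1) * (2 * (n : ℝ)) ^ (b + 1) := hshift.trans h2n
    _ ≤ 4 / (b + 1) * (2 * (n : ℝ) ^ (b + 1)) := by gcongr
    _ = 8 / (b + 1) * (n : ℝ) ^ (b + 1) := by ring

theorem rpow_mul_rpow_le_add_div_two {u v : ℝ} (hu : 0 ≤ u) (hv : 0 ≤ v) (a : ℝ) :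
    u ^ a * v ^ a ≤ (u ^ (2 * a) + v ^ (2 * a)) / 2 := by
  rw [mul_comm 2 a, Real.rpow_mul hu, Real.rpow_mul hv, Real.rpow_two, Real.rpow_two]
  linarith [two_mul_le_add_sq (u ^ a) (v ^ a)]

theorem sum_Icc_abs_sub_mul_abs_add_rpow_le {a : ℝ} (ha : -1 < 2 * a) (ha0 : 2 * a ≤ 0)
    {n : ℕ} (hn : 1 ≤ n) {p q : ℤ} (hp : |p| ≤ n) (hq : |q| ≤ n) :
    ∑ r ∈ Icc (-(n : ℤ) + 1) (n - 1), ((|r - p| : ℝ) + 1) ^ a * ((|r + q| : ℝ) + 1) ^ a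
      ≤ 8 / (2 * a + 1) * (n : ℝ) ^ (2 * a + 1) := by
  have hp' := sum_Icc_abs_add_add_one_rpow_le ha ha0 hn (c := -p) (by rwa [abs_neg])
  have hq' := sum_Icc_abs_add_add_one_rpow_le ha ha0 hn hq
  simp only [Int.cast_neg, ← sub_eq_add_neg] at hp'
  calc _ ≤ ∑ r ∈ Icc (-(n : ℤ) + 1) (n - 1),
          (((|r - p| : ℝ) + 1) ^ (2 * a) + ((|r + q| : ℝ) + 1) ^ (2 * a)) / 2 :=
        sum_le_sum fun r _ => rpow_mul_rpow_le_add_div_two (by positivity) (by positivity) a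
    _ ≤ 8 / (2 * a + 1) * (n : ℝ) ^ (2 * a + 1) := by
        rw [← sum_div, sum_add_distrib]
        linarith

theorem sum_mul_sum_mul_le_sq_mul {ι : Type*} {s : Finset ι} {w : ι → ℝ} {f : ι → ι → ℝ}
    {W B : ℝ} (hw : ∀ i ∈ s, 0 ≤ w i) (hW : ∑ i ∈ s, w i ≤ W) (hB : 0 ≤ B)
    (hf : ∀ i ∈ s, ∀ j ∈ s, f i j ≤ B) :
    ∑ i ∈ s, w i * ∑ j ∈ s, w j * f i j ≤ W ^ 2 * B :=
  calc _ ≤ ∑ i ∈ s, w i * ∑ j ∈ s, w j * B := by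
        gcongr with i hi j hj
        exacts [hw i hi, hw j hj, hf i hi j hj]
    _ = (∑ i ∈ s, w i) ^ 2 * B := by rw [← sum_mul, ← sum_mul]; ring
    _ ≤ W ^ 2 * B := by gcongr; exact sum_nonneg hw

/-- the bound for the connected-diagram term
`γ_xε²(p)γ_xε²(q)γ_εx(r-p)γ_xε(r+q)` (Figure 1) in Part III of the proof of Lemma 1,
for `1/3 < d_x, d_ε < 1/2`. -/
theorem figure1_diagram_bound (dx dε : ℝ)
    (hdx1 : 1 / 3 < dx) (hdx2 : dx < 1 / 2) (hdε1 : 1 / 3 < dε) (hdε2 : dε < 1 / 2) :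
    ∃ C : ℝ, 0 < C ∧ ∀ n M : ℕ, 1 ≤ M → M ≤ n →
      (n : ℝ)⁻¹ *
          ∑ p ∈ Finset.Icc (-(M : ℤ)) (M : ℤ), ((|p| : ℝ) + 1) ^ (2 * (dx + dε - 1)) *
            ∑ q ∈ Finset.Icc (-(M : ℤ)) (M : ℤ), ((|q| : ℝ) + 1) ^ (2 * (dx + dε - 1)) *
              ∑ r ∈ Finset.Icc (-(n : ℤ) + 1) ((n : ℤ) - 1),
                ((|r - p| : ℝ) + 1) ^ (dx + dε - 1) * ((|r + q| : ℝ) + 1) ^ (dx + dε - 1)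
        ≤ C * ((M : ℝ) ^ (4 * dx + 4 * dε - 1) * (n : ℝ)⁻¹ +
            (M : ℝ) ^ (4 * dx + 4 * dε - 2) * (n : ℝ) ^ (2 * dx + 2 * dε - 2)) := by
  set a := dx + dε - 1 with ha_def
  have ha : -1 < 2 * a := by linarith
  have ha0 : 2 * a ≤ 0 := by linarith
  have ha1 : 0 < 2 * a + 1 := by linarith
  refine ⟨(4 / (2 * a + 1)) ^ 2 * (8 / (2 * a + 1)), by positivity, fun n M hM hMn => ?_⟩
  have hn : (0 : ℝ) < n := by exact_mod_cast hM.trans hMn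
  have hMpow : ((M : ℝ) ^ (2 * a + 1)) ^ 2 = (M : ℝ) ^ (4 * dx + 4 * dε - 2) := by
    rw [← Real.rpow_natCast, ← Real.rpow_mul (Nat.cast_nonneg M), ha_def]
    ring_nf
  have hnpow : (n : ℝ)⁻¹ * (n : ℝ) ^ (2 * a + 1) = (n : ℝ) ^ (2 * dx + 2 * dε - 2) := by
    rw [Real.rpow_add_one hn.ne', mul_comm _ (n : ℝ), inv_mul_cancel_left₀ hn.ne', ha_def]
    ring_nf
  calc _ ≤ (n : ℝ)⁻¹ * ((4 / (2 * a + 1) * (M : ℝ) ^ (2 * a + 1)) ^ 2 *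
          (8 / (2 * a + 1) * (n : ℝ) ^ (2 * a + 1))) := by
        gcongr (n : ℝ)⁻¹ * ?_
        refine sum_mul_sum_mul_le_sq_mul (fun p _ => by positivity)
          (sum_Icc_neg_abs_add_one_rpow_le_of_one_le ha ha0 hM) (by positivity) fun p hp q hq => ?_
        rw [mem_Icc] at hp hq
        exact sum_Icc_abs_sub_mul_abs_add_rpow_le ha ha0 (hM.trans hMn)
          (abs_le.mpr (by omega)) (abs_le.mpr (by omega))
    _ = (4 / (2 * a + 1)) ^ 2 * (8 / (2 * a + 1)) *
          ((M : ℝ) ^ (4 * dx + 4 * dε - 2) * (n : ℝ) ^ (2 * dx + 2 * dε - 2)) := by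
        rw [← hMpow, ← hnpow]
        ring
    _ ≤ _ := by
        gcongr
        exact le_add_of_nonneg_left (by positivity)
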